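/- arXiv:1311.6958 — 4 statements merged into one kernel-verified Lean document; each statement's English description precedes it below -/
import Mathlib

section
/- Let k = 2^s and let φ: {0,1}^s → [k] be the binary expansion bijection φ(x) = 1 + Σ_{i=1}^s x_i 2^{i-1}. Let F: [k] → {0,1} and suppose there are exactly m indices b ∈ [k-1] with F(b) ≠ F(b+1). Then the number of pairs (z,i) ∈ [k] × [s] such that the i-th binary digit of z-1 is 0 and F(z) ≠ F(z + 2^{i-1}) is at most (k-1)·m. -/
/-!
Every pair `(z, i)` counted in the theorem is a jump from `z` to `z + 2^(i-1)` across which `F`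
changes value, so it passes over some boundary `b` of `F`, i.e. `z ≤ b < z + 2^(i-1)`; the digit
condition keeps `z + 2^(i-1) ≤ k`, so `b ≤ k - 1`. For a fixed `b` and `i` at most `2^(i-1)`
values of `z` jump over `b`, hence at most `1 + 2 + ⋯ + 2^(s-1) = k - 1` pairs in total.
-/

open Finset

theorem exists_ne_succ_of_ne_add {α : Type*} (f : ℕ → α) {a n : ℕ} (h : f a ≠ f (a + n)) :
    ∃ b ∈ Ico a (a + n), f b ≠ f (b + 1) := by
  contrapose! h
  induction n with
  | zero => rfl
  | succ n ih =>
    exact (ih fun b hb => h b (by simp only [mem_Ico] at hb ⊢; omega)).trans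
      (h (a + n) (by simp))

theorem Nat.add_two_pow_lt_two_pow_of_testBit_eq_false {n j s : ℕ} (hj : j < s)
    (hn : n < 2 ^ s) (hb : n.testBit j = false) : n + 2 ^ j < 2 ^ s := by
  have hdigit : n / 2 ^ j % 2 = 0 := by
    simpa [Nat.testBit_eq_decide_div_mod_eq] using hb
  have hlow : n % 2 ^ (j + 1) < 2 ^ j := by
    rw [Nat.mod_pow_succ, hdigit, Nat.mul_zero, Nat.add_zero]
    exact Nat.mod_lt _ (Nat.two_pow_pos j)
  have hsplit : 2 ^ s = 2 ^ (s - (j + 1)) * 2 ^ (j + 1) := by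
    rw [← pow_add, Nat.sub_add_cancel hj]
  have hq : n / 2 ^ (j + 1) + 1 ≤ 2 ^ (s - (j + 1)) :=
    (Nat.div_lt_iff_lt_mul (Nat.two_pow_pos _)).2 (hsplit ▸ hn)
  calc n + 2 ^ j
      = 2 ^ (j + 1) * (n / 2 ^ (j + 1)) + (n % 2 ^ (j + 1) + 2 ^ j) := by
        rw [← add_assoc, Nat.div_add_mod]
    _ < 2 ^ (j + 1) * (n / 2 ^ (j + 1)) + 2 ^ (j + 1) := by
        have := pow_succ 2 j
        omega
    _ = (n / 2 ^ (j + 1) + 1) * 2 ^ (j + 1) := by ring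
    _ ≤ 2 ^ s := hsplit ▸ Nat.mul_le_mul_right _ hq

def jumpsOver (Z : Finset ℕ) (s b : ℕ) : Finset (ℕ × ℕ) :=
  (Z ×ˢ Icc 1 s).filter fun p => p.1 ≤ b ∧ b < p.1 + 2 ^ (p.2 - 1)

theorem card_jumpsOver_le (Z : Finset ℕ) (s b : ℕ) : #(jumpsOver Z s b) ≤ 2 ^ s - 1 := by
  have hfiber : ∀ j ∈ range s,
      #((jumpsOver Z s b).filter fun p => p.2 - 1 = j) ≤ 2 ^ j := by
    intro j _
    calc #((jumpsOver Z s b).filter fun p => p.2 - 1 = j)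
        ≤ #(Ico (b + 1 - 2 ^ j) (b + 1)) := by
          refine card_le_card_of_injOn Prod.fst (fun p hp => ?_) (fun p hp q hq hpq => ?_)
          · simp only [jumpsOver, coe_filter, mem_filter, mem_product, mem_Icc,
              Set.mem_ofPred_eq] at hp
            simp only [coe_Ico, Set.mem_Ico]
            obtain ⟨⟨_, _, _⟩, rfl⟩ := hp
            omega
          · simp only [jumpsOver, coe_filter, mem_filter, mem_product, mem_Icc,
              Set.mem_ofPred_eq] at hp hq
            exact Prod.ext hpq (by omega)
      _ ≤ 2 ^ j := by rw [Nat.card_Ico]; generalize 2 ^ j = t; omega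
  calc #(jumpsOver Z s b)
      = ∑ j ∈ range s, #((jumpsOver Z s b).filter fun p => p.2 - 1 = j) := by
        refine card_eq_sum_card_fiberwise fun p hp => ?_
        simp only [jumpsOver, coe_filter, mem_product, mem_Icc, Set.mem_ofPred_eq] at hp
        simp only [coe_range, Set.mem_Iio]
        omega
    _ ≤ ∑ j ∈ range s, 2 ^ j := sum_le_sum hfiber
    _ = 2 ^ s - 1 := by simp [Nat.geomSum_eq le_rfl]

theorem stmt0_general (s k : ℕ) (hk : k = 2 ^ s) (F : ℕ → Bool) (m : ℕ)
    (hm : ((Finset.Icc 1 (k - 1)).filter (fun b => F b ≠ F (b + 1))).card = m) :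
    (((Finset.Icc 1 k ×ˢ Finset.Icc 1 s)).filter
      (fun p => (p.1 - 1).testBit (p.2 - 1) = false ∧ F p.1 ≠ F (p.1 + 2 ^ (p.2 - 1)))).card
      ≤ (k - 1) * m := by
  subst hk
  rw [← hm, mul_comm]
  refine le_trans (card_le_card fun p hp => ?_)
    (card_biUnion_le_card_mul _ (jumpsOver (Icc 1 (2 ^ s)) s) _
      fun b _ => card_jumpsOver_le _ s b)
  obtain ⟨z, i⟩ := p
  simp only [mem_filter, mem_product, mem_Icc] at hp
  obtain ⟨⟨⟨hz1, hzk⟩, hi1, his⟩, hdigit, hF⟩ := hp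
  obtain ⟨b, hb, hFb⟩ := exists_ne_succ_of_ne_add F hF
  have hjump : z - 1 + 2 ^ (i - 1) < 2 ^ s :=
    Nat.add_two_pow_lt_two_pow_of_testBit_eq_false (by omega) (by omega) hdigit
  simp only [mem_Ico] at hb
  simp only [jumpsOver, mem_biUnion, mem_filter, mem_product, mem_Icc]
  exact ⟨b, ⟨⟨by omega, by omega⟩, hFb⟩, ⟨⟨hz1, hzk⟩, hi1, his⟩, hb.1, hb.2⟩

/-- For `k = 2^s`, if `F : [k] → {0,1}` has exactly `m` boundary points
`b ∈ [k-1]` with `F b ≠ F (b+1)`, then the number of pairs `(z,i) ∈ [k] × [s]` with the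
`i`-th binary digit of `z-1` equal to `0` and `F z ≠ F (z + 2^(i-1))` is at most `(k-1)·m`. -/
theorem stmt0 (s k : ℕ) (hs : 0 < s) (hk : k = 2 ^ s) (F : ℕ → Bool) (m : ℕ)
    (hm : ((Finset.Icc 1 (k - 1)).filter (fun b => F b ≠ F (b + 1))).card = m) :
    (((Finset.Icc 1 k ×ˢ Finset.Icc 1 s)).filter
      (fun p => (p.1 - 1).testBit (p.2 - 1) = false ∧ F p.1 ≠ F (p.1 + 2 ^ (p.2 - 1)))).card
      ≤ (k - 1) * m :=
  stmt0_general s k hk F m hm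
end

section
/- Let k = 2^s and let I ⊆ [k] be a nonempty interval of consecutive integers with |I| ≤ k/2. Identify [k] with {0,1}^s via binary expansion, and let ∂̃(I) denote the edge-boundary of the corresponding subset of the hypercube {0,1}^s. Then |∂̃(I)| ≤ 6 |I| log₂(k/|I|). -/
/-- The edge-boundary, in the hypercube `{0,1}^s` (identified with `[k]`, `k = 2^s`, via
binary expansion `φ(x) = 1 + Σ x_i 2^(i-1)`), of a subset `B ⊆ [k]`: each hypercube edge is
counted once, from its endpoint whose `i`-th digit is `0`. -/
def cubeBoundary (k s : ℕ) (B : Finset ℕ) : ℕ :=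
  (((Finset.Icc 1 k ×ˢ Finset.Icc 1 s)).filter
    (fun p => (p.1 - 1).testBit (p.2 - 1) = false ∧
      ((p.1 ∈ B) ≠ (p.1 + 2 ^ (p.2 - 1) ∈ B)))).card

/-!
An edge in direction `j` joins `y` and `y + 2^j`. For an interval `I = [a, b]` such an edge
leaves `I` only if it crosses `a` or `b`, so there are at most `2^(j+1)` of them; there are also
at most `|I|` of them, since each has exactly one endpoint in `I`. With `L = ⌊log₂ |I|⌋`,
summing `min(|I|, 2^(j+1))` over `j < s` gives `|∂̃ I| ≤ 2|I| + |I|(s - L)`, and as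
`log₂(k/|I|) > s - L - 1` and `log₂(k/|I|) ≥ 1`, this is at most `6 |I| log₂(k/|I|)`.
-/

open Finset Real

/-- The lower endpoints of the boundary edges of `B` in direction `j` (flipping binary digit `j`
of `y - 1`). -/
def cubeBoundaryDir (k j : ℕ) (B : Finset ℕ) : Finset ℕ :=
  (Icc 1 k).filter fun y => (y - 1).testBit j = false ∧ ((y ∈ B) ≠ (y + 2 ^ j ∈ B))

lemma cubeBoundary_eq_sum (k s : ℕ) (B : Finset ℕ) :
    cubeBoundary k s B = ∑ j ∈ range s, #(cubeBoundaryDir k j B) := by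
  rw [cubeBoundary, card_filter, sum_product, sum_comm]
  refine sum_nbij' (· - 1) (· + 1) (by simp +contextual; omega) (by simp) (by simp +contextual)
    (by simp) fun j _ => (card_filter _ _).symm

/-- Send each edge to its endpoint in `B`; it is recovered because only the lower endpoint `y`
has digit `j` of `y - 1` equal to `0`. -/
lemma card_cubeBoundaryDir_le_card (k j : ℕ) (B : Finset ℕ) :
    #(cubeBoundaryDir k j B) ≤ #B := by
  classical
  refine card_le_card_of_injOn (fun y => if y ∈ B then y else y + 2 ^ j) ?_ ?_
  · intro y hy
    have hne := (mem_filter.mp hy).2.2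
    by_cases h : y ∈ B <;> simp_all
  · have hshift : ∀ y ∈ cubeBoundaryDir k j B, ∀ y' ∈ cubeBoundaryDir k j B, y ≠ y' + 2 ^ j := by
      intro y hy y' hy' he
      simp only [cubeBoundaryDir, mem_filter, mem_Icc] at hy hy'
      have : y - 1 = 2 ^ j + (y' - 1) := by omega
      have := Nat.testBit_two_pow_add_eq (y' - 1) j
      simp_all
    intro y hy y' hy' he
    by_cases h : y ∈ B <;> by_cases h' : y' ∈ B <;> simp only [h, h', if_true, if_false] at he
    · exact he
    · exact absurd he (hshift y hy y' hy')
    · exact absurd he.symm (hshift y' hy' y hy)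
    · omega

lemma card_cubeBoundaryDir_Icc_le (k j a b : ℕ) :
    #(cubeBoundaryDir k j (Icc a b)) ≤ 2 ^ (j + 1) := by
  have hsub : cubeBoundaryDir k j (Icc a b) ⊆ Ioc (b - 2 ^ j) b ∪ Ico (a - 2 ^ j) a := by
    intro y hy
    simp only [cubeBoundaryDir, mem_filter, mem_Icc, ne_eq, eq_iff_iff, mem_union, mem_Ioc,
      mem_Ico] at hy ⊢
    have := Nat.one_le_two_pow (n := j)
    omega
  calc #(cubeBoundaryDir k j (Icc a b))
      ≤ #(Ioc (b - 2 ^ j) b) + #(Ico (a - 2 ^ j) a) := (card_le_card hsub).trans (card_union_le _ _)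
    _ ≤ 2 ^ (j + 1) := by rw [Nat.card_Ioc, Nat.card_Ico, pow_succ]; omega

lemma sum_range_min_two_pow_le {n s : ℕ} (hs : Nat.log 2 n ≤ s) :
    ∑ j ∈ range s, min n (2 ^ (j + 1)) ≤ n * (2 + (s - Nat.log 2 n)) := by
  set L := Nat.log 2 n
  have hlow : ∑ j ∈ range L, min n (2 ^ (j + 1)) ≤ 2 * n := by
    rcases n.eq_zero_or_pos with rfl | hn
    · simp [L]
    calc ∑ j ∈ range L, min n (2 ^ (j + 1)) ≤ ∑ j ∈ range L, 2 * 2 ^ j :=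
          sum_le_sum fun j _ => (min_le_right _ _).trans_eq (pow_succ' 2 j)
      _ ≤ 2 * 2 ^ L := by
          rw [← mul_sum]
          exact Nat.mul_le_mul_left 2 (Nat.geomSum_lt le_rfl fun _ => mem_range.mp).le
      _ ≤ 2 * n := Nat.mul_le_mul_left 2 (Nat.pow_log_le_self 2 hn.ne')
  have hhigh : ∑ j ∈ Ico L s, min n (2 ^ (j + 1)) ≤ n * (s - L) := by
    calc ∑ j ∈ Ico L s, min n (2 ^ (j + 1)) ≤ ∑ j ∈ Ico L s, n :=
          sum_le_sum fun j _ => min_le_left _ _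
      _ = n * (s - L) := by rw [sum_const, Nat.card_Ico, smul_eq_mul, mul_comm]
  rw [← sum_range_add_sum_Ico _ hs]
  linarith

lemma cubeBoundary_Icc_le {k s a b : ℕ} (hs : Nat.log 2 #(Icc a b) ≤ s) :
    cubeBoundary k s (Icc a b) ≤ #(Icc a b) * (2 + (s - Nat.log 2 #(Icc a b))) := by
  rw [cubeBoundary_eq_sum]
  refine le_trans (sum_le_sum fun j _ => ?_) (sum_range_min_two_pow_le hs)
  exact le_min (card_cubeBoundaryDir_le_card k j _) (card_cubeBoundaryDir_Icc_le k j a b)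

lemma two_add_sub_natLog_le_six_logb {n s : ℕ} (hn : 0 < n) (h2n : 2 * n ≤ 2 ^ s) :
    (2 + (s - Nat.log 2 n : ℕ) : ℝ) ≤ 6 * logb 2 (2 ^ s / n) := by
  have hn' : (0 : ℝ) < n := by exact_mod_cast hn
  have hLs : Nat.log 2 n < s := Nat.log_lt_of_lt_pow hn.ne' (by omega)
  have hlogb_lt : logb 2 n < Nat.log 2 n + 1 := by
    have := natFloor_logb_natCast 2 n
    push_cast at this
    exact this ▸ Nat.lt_floor_add_one _
  have hsplit : logb 2 (2 ^ s / n) = s - logb 2 n := by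
    rw [logb_div (by positivity) hn'.ne', logb_pow, logb_self_eq_one one_lt_two, mul_one]
  have hone : 1 ≤ logb 2 (2 ^ s / n) := by
    rw [le_logb_iff_rpow_le one_lt_two (by positivity), rpow_one, le_div_iff₀ hn']
    exact_mod_cast (by linarith : 2 * n ≤ 2 ^ s)
  push_cast [hLs.le]
  have : (Nat.log 2 n : ℝ) + 1 ≤ s := by exact_mod_cast hLs
  linarith

theorem stmt2_general (s k a b : ℕ) (hk : k = 2 ^ s)
    (hsize : (Finset.Icc a b).card ≤ k / 2) :
    (cubeBoundary k s (Finset.Icc a b) : ℝ) ≤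
      6 * (Finset.Icc a b).card * Real.logb 2 ((k : ℝ) / (Finset.Icc a b).card) := by
  subst hk
  set n := #(Icc a b)
  have h2n : 2 * n ≤ 2 ^ s := by omega
  have hLs : Nat.log 2 n ≤ s :=
    (Nat.log_mono_right (by omega : n ≤ 2 ^ s)).trans (Nat.log_pow one_lt_two s).le
  have hbound : (cubeBoundary (2 ^ s) s (Icc a b) : ℝ) ≤ n * (2 + (s - Nat.log 2 n : ℕ) : ℝ) := by
    exact_mod_cast cubeBoundary_Icc_le hLs
  rcases n.eq_zero_or_pos with hn | hn
  · simpa [hn] using hbound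
  calc (cubeBoundary (2 ^ s) s (Icc a b) : ℝ) ≤ n * (2 + (s - Nat.log 2 n : ℕ) : ℝ) := hbound
    _ ≤ n * (6 * logb 2 (2 ^ s / n)) := by
        gcongr
        exact two_add_sub_natLog_le_six_logb hn h2n
    _ = _ := by push_cast; ring

/-- For `k = 2^s` and a nonempty interval `I ⊆ [k]` with `|I| ≤ k/2`,
the hypercube edge-boundary of `I` satisfies `|∂̃ I| ≤ 6 |I| log₂(k/|I|)`. -/
theorem stmt2 (s k a b : ℕ) (hs : 0 < s) (hk : k = 2 ^ s)
    (ha : 1 ≤ a) (hab : a ≤ b) (hbk : b ≤ k)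
    (hsize : (Finset.Icc a b).card ≤ k / 2) :
    (cubeBoundary k s (Finset.Icc a b) : ℝ) ≤
      6 * (Finset.Icc a b).card * Real.logb 2 ((k : ℝ) / (Finset.Icc a b).card) :=
  stmt2_general s k a b hk hsize
end

section
/- For any two functions h, h̃: (Z_k)^n → Z_l, we have ‖h - h̃‖₁ = (1/2) Σ_{t ∈ Z_l} ‖h^{(t)} - h̃^{(t)}‖₁, where for g: (Z_k)^n → Z_l and t ∈ Z_l, g^{(t)}(x) = 1 if g(x) ∈ {t, t+1, ..., t+⌊l/2⌋-1} (addition mod l) and 0 otherwise, and ‖·‖₁ denotes the normalized L¹ norm with distances in Z_l measured by cyclic distance for h - h̃, and by absolute difference of {0,1}-values for the Boolean functions. -/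
/-- Cyclic distance in `ZMod l`. -/
def cdist (l : ℕ) [NeZero l] (a b : ZMod l) : ℕ := min (a - b).val (l - (a - b).val)

/-- The Boolean cut `g^{(t)}` of `g : (Z_k)^n → Z_l`, as a real-valued indicator:
`g^{(t)}(x) = 1` iff `g x ∈ {t, t+1, …, t + ⌊l/2⌋ - 1}` (mod `l`). -/
noncomputable def cut (l : ℕ) [NeZero l] (t y : ZMod l) : ℝ :=
  if (y - t).val < l / 2 then 1 else 0

lemma count_lemma (l d : ℕ) (hl : 0 < l) (hd : d < l) :
    ((Finset.range l).filter (fun u => ¬(u < l/2 ↔ (u + l - d) % l < l/2))).card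
      = 2 * min d (l - d) := by
  have hm : l/2 * 2 ≤ l ∧ l ≤ l/2*2+1 := ⟨Nat.div_mul_le_self l 2, by omega⟩
  set m := l/2 with hmdef
  have hset : (Finset.range l).filter (fun u => ¬(u < m ↔ (u + l - d) % l < m))
      = (Finset.Ico (max d m) (min l (m + d))) ∪ (Finset.Ico (m - (l - d)) (min d m)) := by
    ext u
    simp only [Finset.mem_filter, Finset.mem_range, Finset.mem_union, Finset.mem_Ico,
      lt_min_iff, max_le_iff, le_max_iff, min_le_iff]
    by_cases hu : u < l
    · have hmod : (u + l - d) % l = if u < d then u + l - d else u - d := by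
        split_ifs with h
        · exact Nat.mod_eq_of_lt (by omega)
        · have h2 : u + l - d = (u - d) + l := by omega
          rw [h2, Nat.add_mod_right]; exact Nat.mod_eq_of_lt (by omega)
      rw [hmod]
      split_ifs with h <;> constructor <;> intro h3 <;> omega
    · constructor <;> intro h3 <;> omega
  rw [hset, Finset.card_union_of_disjoint, Nat.card_Ico, Nat.card_Ico]
  · omega
  · rw [Finset.disjoint_left]
    intro u hu hu'
    simp only [Finset.mem_Ico, lt_min_iff, max_le_iff, le_max_iff, min_le_iff] at hu hu'
    omega

lemma val_sub_eq (l : ℕ) [NeZero l] (x s : ZMod l) :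
    (x - s).val = (x.val + l - s.val) % l := by
  have hs : s.val ≤ l := le_of_lt (ZMod.val_lt s)
  have : x - s = ((x.val + (l - s.val) : ℕ) : ZMod l) := by
    push_cast [Nat.cast_sub hs]
    simp [ZMod.natCast_val, ZMod.natCast_self]
    ring
  rw [this, ZMod.val_natCast]
  congr 1
  omega

lemma cut_sum (l : ℕ) [NeZero l] (a b : ZMod l) :
    ∑ t : ZMod l, |cut l t a - cut l t b| = ((2 * cdist l a b : ℕ) : ℝ) := by
  have hl : 0 < l := Nat.pos_of_ne_zero (NeZero.ne l)
  set d := (a - b).val with hd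
  have hdl : d < l := ZMod.val_lt _
  have step1 : ∀ t : ZMod l, |cut l t a - cut l t b|
      = if ¬((a - t).val < l/2 ↔ (b - t).val < l/2) then (1:ℝ) else 0 := by
    intro t
    unfold cut
    split_ifs <;> norm_num <;> tauto
  simp only [step1]
  rw [Finset.sum_boole]
  norm_num
  have hcard : (Finset.univ.filter
      (fun t : ZMod l => ¬((a - t).val < l/2 ↔ (b - t).val < l/2))).card
      = ((Finset.range l).filter (fun u => ¬(u < l/2 ↔ (u + l - d) % l < l/2))).card := by
    apply Finset.card_bij (fun t _ => (a - t).val)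
    · intro t ht
      simp only [Finset.mem_filter, Finset.mem_univ, true_and] at ht ⊢
      simp only [Finset.mem_range]
      refine ⟨ZMod.val_lt _, ?_⟩
      rw [hd, ← val_sub_eq, show a - t - (a - b) = b - t from by ring]
      exact ht
    · intro t _ t' _ hval
      have := congrArg (fun v : ℕ => (v : ZMod l)) hval
      simp only [ZMod.natCast_val, ZMod.cast_id] at this
      exact sub_right_injective this
    · intro u hu
      simp only [Finset.mem_filter, Finset.mem_range] at hu
      refine ⟨a - (u : ZMod l), ?_, ?_⟩
      · simp only [Finset.mem_filter, Finset.mem_univ, true_and]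
        have h1 : a - (a - (u : ZMod l)) = (u : ZMod l) := by ring
        have h2 : (b - (a - (u : ZMod l))) = (u : ZMod l) - (a - b) := by ring
        rw [h1, h2, val_sub_eq, ZMod.val_natCast, Nat.mod_eq_of_lt hu.1]
        exact hu.2
      · have h1 : a - (a - (u : ZMod l)) = (u : ZMod l) := by ring
        rw [h1, ZMod.val_natCast, Nat.mod_eq_of_lt hu.1]
  rw [hcard, count_lemma l d hl hdl]
  unfold cdist
  push_cast
  ring

/-- For `h, h̃ : (Z_k)^n → Z_l`,
`‖h - h̃‖₁ = (1/2) Σ_{t ∈ Z_l} ‖h^{(t)} - h̃^{(t)}‖₁`, where `‖·‖₁` is the normalized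
`L¹` norm (cyclic distance for `Z_l`-valued functions, absolute difference for Boolean). -/
theorem stmt7 (k l n : ℕ) [NeZero k] [NeZero l]
    (h h' : (Fin n → ZMod k) → ZMod l) :
    (1 / (k : ℝ) ^ n) * ∑ x : Fin n → ZMod k, (cdist l (h x) (h' x) : ℝ) =
      (1 / 2) * ∑ t : ZMod l,
        (1 / (k : ℝ) ^ n) * ∑ x : Fin n → ZMod k, |cut l t (h x) - cut l t (h' x)| := by
  have hswap : ∑ t : ZMod l, (1 / (k : ℝ) ^ n) *
        ∑ x : Fin n → ZMod k, |cut l t (h x) - cut l t (h' x)|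
      = (1 / (k : ℝ) ^ n) * ∑ x : Fin n → ZMod k, (2 * (cdist l (h x) (h' x) : ℝ)) := by
    rw [← Finset.mul_sum, Finset.sum_comm]
    congr 1
    refine Finset.sum_congr rfl (fun x _ => ?_)
    rw [cut_sum]
    push_cast
    ring
  rw [hswap]
  rw [Finset.mul_sum, Finset.mul_sum]
  rw [Finset.mul_sum]
  refine Finset.sum_congr rfl (fun x _ => ?_)
  ring
end

section
/- Let k, l, n be positive integers with k ≥ 2 and l > k satisfying (1 + k/(l-k))^n ≤ 2. Partition [l]^n into blocks R_x = {y ∈ [l]^n : (⌈y_1 k/l⌉, ..., ⌈y_n k/l⌉) = x} for x ∈ [k]^n. Then ⌊l/k⌋^n ≤ |R_x| ≤ ⌈l/k⌉^n for all x ∈ [k]^n, and for A ⊆ [k]^n with Ă = ∪_{x∈A} R_x ⊆ [l]^n, one has |∂Ă|/l^{n-1} ≤ 2 |∂A|/k^{n-1}, where ∂ denotes the edge-boundary in the respective ℓ¹-grid graphs G_{l,n} and G_{k,n}. -/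
/-- The vertex set of the `ℓ¹`-grid `G_{k,n}`, as points of `ℕ^n` with coordinates in
`{1,…,k}`. -/
def gridPts (k n : ℕ) : Set (Fin n → ℕ) := {y | ∀ i, y i ∈ Finset.Icc 1 k}

/-- Adjacency in the `ℓ¹`-grid: differ by exactly `1` in exactly one coordinate. -/
def gridAdj (n : ℕ) (x y : Fin n → ℕ) : Prop :=
  ∃ j, (x j = y j + 1 ∨ y j = x j + 1) ∧ ∀ i, i ≠ j → x i = y i

/-- Size of the edge-boundary of `A` in the grid `G_{k,n}`: each boundary edge counted once,
as the ordered pair (inside endpoint, outside endpoint in the grid). -/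
noncomputable def gridBoundary (k n : ℕ) (A : Set (Fin n → ℕ)) : ℕ :=
  Set.ncard {p : (Fin n → ℕ) × (Fin n → ℕ) |
    p.1 ∈ A ∧ p.2 ∉ A ∧ p.2 ∈ gridPts k n ∧ gridAdj n p.1 p.2}

/-- The block `R_x ⊆ [l]^n` of the point `x ∈ [k]^n`: those `y ∈ [l]^n` with
`⌈y_i k / l⌉ = x_i` for all `i` (`⌈a/l⌉ = (a + l - 1)/l` in ℕ). -/
def block (k l n : ℕ) (x : Fin n → ℕ) : Set (Fin n → ℕ) :=
  {y | y ∈ gridPts l n ∧ ∀ i, (y i * k + l - 1) / l = x i}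

/-! Writing `⌈m k / l⌉ = x` as `m ∈ (l (x - 1) / k, l x / k]`, each block is a product of
intervals of length between `⌊l/k⌋` and `⌈l/k⌉`. Since `k ≤ l`, the coordinatewise map
`y ↦ ⌈y k / l⌉` moves each coordinate by at most one along an edge, so it sends boundary
edges of `Ă` to boundary edges of `A`; over an edge of `G_{k,n}` in direction `j` the `j`-th
coordinates are forced, which leaves at most `⌈l/k⌉^(n-1)` edges. Finally
`⌈l/k⌉ k ≤ l + k ≤ (1 + k/(l-k)) l`, and the hypothesis bounds `(1 + k/(l-k))^(n-1)` by `2`. -/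

open Finset

section OneDimensional

variable {k l : ℕ}

lemma ceilDiv_mem_Icc_iff (hk : 0 < k) (hl : 0 < l) {m : ℕ} :
    m * k ⌈/⌉ l ∈ Icc 1 k ↔ m ∈ Icc 1 l := by
  rw [mem_Icc, mem_Icc, ← not_lt, Nat.lt_one_iff, ← Nat.le_zero, ceilDiv_le_iff_le_mul hl,
    ceilDiv_le_iff_le_mul hl, mul_comm l k, mul_comm m k, Nat.mul_le_mul_left_iff hk]
  simp [hk.ne', Nat.one_le_iff_ne_zero]

/-- For `x ≥ 1`, the `m` with `⌈m k / l⌉ = x`. -/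
def blockInterval (k l x : ℕ) : Finset ℕ := Ioc (l * (x - 1) / k) (l * x / k)

lemma mem_blockInterval_iff (hk : 0 < k) (hl : 0 < l) {x m : ℕ} (hx : 0 < x) :
    m ∈ blockInterval k l x ↔ m * k ⌈/⌉ l = x := by
  rw [blockInterval, mem_Ioc, Nat.div_lt_iff_lt_mul hk, Nat.le_div_iff_mul_le hk,
    ← not_le, ← ceilDiv_le_iff_le_mul hl, ← ceilDiv_le_iff_le_mul hl]
  omega

lemma card_blockInterval_le (hk : 0 < k) (x : ℕ) : #(blockInterval k l x) ≤ (l + k - 1) / k := by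
  rcases Nat.eq_zero_or_pos x with rfl | hx
  · simp [blockInterval]
  obtain ⟨x, rfl⟩ := Nat.exists_eq_add_of_lt hx
  rw [blockInterval, Nat.card_Ioc, zero_add, Nat.add_sub_cancel, mul_add_one]
  set a := l * x
  have h : (a + l) / k ≤ a / k + (l + k - 1) / k := by
    calc (a + l) / k = (k * (a / k) + (a % k + l)) / k := by rw [← add_assoc, Nat.div_add_mod]
      _ = a / k + (a % k + l) / k := Nat.mul_add_div hk _ _
      _ ≤ a / k + (l + k - 1) / k := by
        gcongr; have := Nat.mod_lt a hk; omega
  exact tsub_le_iff_left.mpr h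

lemma div_le_card_blockInterval {x : ℕ} (hx : 0 < x) : l / k ≤ #(blockInterval k l x) := by
  obtain ⟨x, rfl⟩ := Nat.exists_eq_add_of_lt hx
  rw [blockInterval, Nat.card_Ioc, zero_add, Nat.add_sub_cancel, mul_add_one]
  exact le_tsub_of_add_le_left Nat.div_add_div_le_add_div

lemma ceilDiv_mul_le_ceilDiv_succ_mul (hl : 0 < l) (m : ℕ) :
    m * k ⌈/⌉ l ≤ (m + 1) * k ⌈/⌉ l :=
  (gc_mul_ceilDiv hl).monotone_l (Nat.mul_le_mul_right k m.le_succ)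

lemma ceilDiv_succ_mul_le (hl : 0 < l) (hkl : k ≤ l) (m : ℕ) :
    (m + 1) * k ⌈/⌉ l ≤ m * k ⌈/⌉ l + 1 := by
  rw [ceilDiv_le_iff_le_mul hl, mul_add_one, add_one_mul]
  exact add_le_add (le_smul_ceilDiv hl) hkl

/-- The edge of the line `[l]` leading from `blockInterval k l x` into the adjacent
`blockInterval k l x'`. -/
def crossingEdge (k l x x' : ℕ) : ℕ × ℕ :=
  if x' = x + 1 then (l * x / k, l * x / k + 1) else (l * x' / k + 1, l * x' / k)

lemma eq_crossingEdge {x x' m m' : ℕ} (hm : m ∈ blockInterval k l x)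
    (hm' : m' ∈ blockInterval k l x') (hmm' : m = m' + 1 ∨ m' = m + 1)
    (hxx' : x = x' + 1 ∨ x' = x + 1) : (m, m') = crossingEdge k l x x' := by
  simp only [blockInterval, mem_Ioc] at hm hm'
  rcases hxx' with rfl | rfl
  · simp only [crossingEdge, Nat.add_sub_cancel] at hm ⊢
    rw [if_neg (by omega), Prod.mk.injEq]
    omega
  · simp only [crossingEdge, Nat.add_sub_cancel, if_true, Prod.mk.injEq] at hm' ⊢
    omega

end OneDimensional

section Grid

variable {k l n : ℕ}

def blockIndex (k l : ℕ) {n : ℕ} (y : Fin n → ℕ) : Fin n → ℕ := fun i => y i * k ⌈/⌉ l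

lemma blockIndex_mem_gridPts_iff (hk : 0 < k) (hl : 0 < l) {y : Fin n → ℕ} :
    blockIndex k l y ∈ gridPts k n ↔ y ∈ gridPts l n :=
  forall_congr' fun _ => ceilDiv_mem_Icc_iff hk hl

lemma mem_block_iff {x y : Fin n → ℕ} :
    y ∈ block k l n x ↔ y ∈ gridPts l n ∧ blockIndex k l y = x := by
  simp only [block, Set.mem_ofPred_eq, funext_iff, blockIndex, Nat.ceilDiv_eq_add_pred_div]

lemma mem_blockInterval_blockIndex (hk : 0 < k) (hl : 0 < l) {y : Fin n → ℕ}
    (hy : y ∈ gridPts l n) (i : Fin n) : y i ∈ blockInterval k l (blockIndex k l y i) :=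
  (mem_blockInterval_iff hk hl (mem_Icc.1 ((blockIndex_mem_gridPts_iff hk hl).2 hy i)).1).2 rfl

lemma block_eq_piFinset (hk : 0 < k) (hl : 0 < l) {x : Fin n → ℕ} (hx : x ∈ gridPts k n) :
    block k l n x = Fintype.piFinset fun i => blockInterval k l (x i) := by
  ext y
  rw [mem_block_iff, Fintype.coe_piFinset, Set.mem_pi]
  constructor
  · rintro ⟨hy, rfl⟩ i -
    exact mem_blockInterval_blockIndex hk hl hy i
  · intro hy
    have hyx : blockIndex k l y = x :=
      funext fun i => (mem_blockInterval_iff hk hl (mem_Icc.1 (hx i)).1).1 (hy i trivial)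
    exact ⟨(blockIndex_mem_gridPts_iff hk hl).1 (hyx ▸ hx), hyx⟩

lemma ncard_block (hk : 0 < k) (hl : 0 < l) {x : Fin n → ℕ} (hx : x ∈ gridPts k n) :
    (block k l n x).ncard = ∏ i, #(blockInterval k l (x i)) := by
  rw [block_eq_piFinset hk hl hx, Set.ncard_coe_finset, Fintype.card_piFinset]

lemma div_pow_le_ncard_block (hk : 0 < k) (hl : 0 < l) {x : Fin n → ℕ}
    (hx : x ∈ gridPts k n) : (l / k) ^ n ≤ (block k l n x).ncard := by
  rw [ncard_block hk hl hx]
  simpa using pow_card_le_prod univ _ _ fun i _ => div_le_card_blockInterval (mem_Icc.1 (hx i)).1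

lemma ncard_block_le (hk : 0 < k) (hl : 0 < l) {x : Fin n → ℕ} (hx : x ∈ gridPts k n) :
    (block k l n x).ncard ≤ ((l + k - 1) / k) ^ n := by
  rw [ncard_block hk hl hx]
  simpa using prod_le_pow_card univ _ _ fun i _ => card_blockInterval_le hk (x i)

lemma mem_biUnion_block_iff {A : Set (Fin n → ℕ)} {y : Fin n → ℕ} :
    y ∈ ⋃ x ∈ A, block k l n x ↔ y ∈ gridPts l n ∧ blockIndex k l y ∈ A := by
  simp only [Set.mem_iUnion, mem_block_iff, exists_prop]
  constructor
  · rintro ⟨x, hx, hy, rfl⟩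
    exact ⟨hy, hx⟩
  · rintro ⟨hy, hx⟩
    exact ⟨_, hx, hy, rfl⟩

lemma gridAdj_blockIndex (hl : 0 < l) (hkl : k ≤ l) {y y' : Fin n → ℕ} (h : gridAdj n y y')
    (hne : blockIndex k l y ≠ blockIndex k l y') :
    gridAdj n (blockIndex k l y) (blockIndex k l y') := by
  obtain ⟨j, hj, hoff⟩ := h
  have hoff' : ∀ i, i ≠ j → blockIndex k l y i = blockIndex k l y' i := fun i hi => by
    simp only [blockIndex, hoff i hi]
  have hne' : blockIndex k l y j ≠ blockIndex k l y' j := fun h =>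
    hne (funext fun i => if hi : i = j then hi ▸ h else hoff' i hi)
  refine ⟨j, ?_, hoff'⟩
  simp only [blockIndex] at hne' ⊢
  rcases hj with h | h <;> rw [h] at hne' ⊢
  · have := ceilDiv_mul_le_ceilDiv_succ_mul (k := k) hl (y' j)
    have := ceilDiv_succ_mul_le hl hkl (y' j)
    omega
  · have := ceilDiv_mul_le_ceilDiv_succ_mul (k := k) hl (y j)
    have := ceilDiv_succ_mul_le hl hkl (y j)
    omega

end Grid

section Edges

variable {k l n : ℕ}

def gridEdges (k n : ℕ) : Set ((Fin n → ℕ) × (Fin n → ℕ)) :=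
  {p | p.1 ∈ gridPts k n ∧ p.2 ∈ gridPts k n ∧ gridAdj n p.1 p.2}

def boundaryEdges (k n : ℕ) (A : Set (Fin n → ℕ)) : Set ((Fin n → ℕ) × (Fin n → ℕ)) :=
  {p | p.1 ∈ A ∧ p.2 ∉ A ∧ p.2 ∈ gridPts k n ∧ gridAdj n p.1 p.2}

lemma gridBoundary_eq_ncard (A : Set (Fin n → ℕ)) :
    gridBoundary k n A = (boundaryEdges k n A).ncard := rfl

lemma gridEdges_finite (k n : ℕ) : (gridEdges k n).Finite := by
  have hpts : (gridPts k n).Finite := (Set.finite_Icc (fun _ => 1) fun _ => k).subset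
    fun y hy => ⟨fun i => (mem_Icc.1 (hy i)).1, fun i => (mem_Icc.1 (hy i)).2⟩
  exact (hpts.prod hpts).subset fun p hp => ⟨hp.1, hp.2.1⟩

lemma boundaryEdges_subset_gridEdges {A : Set (Fin n → ℕ)} (hA : A ⊆ gridPts k n) :
    boundaryEdges k n A ⊆ gridEdges k n :=
  fun _ ⟨h₁, _, h₂, hadj⟩ => ⟨hA h₁, h₂, hadj⟩

lemma mapsTo_boundaryEdges (hk : 0 < k) (hkl : k ≤ l) (A : Set (Fin n → ℕ)) :
    Set.MapsTo (Prod.map (blockIndex k l) (blockIndex k l))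
      (boundaryEdges l n (⋃ x ∈ A, block k l n x)) (boundaryEdges k n A) := by
  rintro ⟨y, y'⟩ ⟨hy, hy', hy'grid, hadj⟩
  have hl : 0 < l := hk.trans_le hkl
  rw [mem_biUnion_block_iff] at hy hy'
  have hout : blockIndex k l y' ∉ A := fun h => hy' ⟨hy'grid, h⟩
  exact ⟨hy.2, hout, (blockIndex_mem_gridPts_iff hk hl).2 hy'grid,
    gridAdj_blockIndex hl hkl hadj fun h => hout (h ▸ hy.2)⟩

/-- Over an edge of `G_{k,n}` in direction `j`, the `j`-th coordinates are pinned down by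
`crossingEdge` and the others range over block intervals. -/
lemma ncard_gridEdges_inter_preimage_le (hk : 0 < k) (hl : 0 < l)
    {b : (Fin n → ℕ) × (Fin n → ℕ)} (hb : gridAdj n b.1 b.2) :
    (gridEdges l n ∩ Prod.map (blockIndex k l) (blockIndex k l) ⁻¹' {b}).ncard ≤
      ((l + k - 1) / k) ^ (n - 1) := by
  classical
  obtain ⟨x, x'⟩ := b
  obtain ⟨j, hj, hoff⟩ := hb
  dsimp only at hj hoff
  set c := crossingEdge k l (x j) (x' j)
  set t : Fin n → Finset ℕ := Function.update (fun i => blockInterval k l (x i)) j {c.1}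
  have hsub : gridEdges l n ∩ Prod.map (blockIndex k l) (blockIndex k l) ⁻¹' {(x, x')} ⊆
      (Fintype.piFinset t).image fun y => (y, Function.update y j c.2) := by
    rintro ⟨y, y'⟩ ⟨⟨hy, hy', j', hj', hoff'⟩, hyx⟩
    dsimp only at hy hy' hj' hoff'
    obtain ⟨rfl, rfl⟩ := Prod.mk.inj hyx
    have hjj' : j' = j := by
      by_contra hne
      have := hoff' j fun h => hne h.symm
      simp only [blockIndex, this] at hj
      omega
    subst hjj'
    have hc : (y j', y' j') = c := eq_crossingEdge (mem_blockInterval_blockIndex hk hl hy j')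
      (mem_blockInterval_blockIndex hk hl hy' j') hj' hj
    refine mem_image.2 ⟨y, Fintype.mem_piFinset.2 fun i => ?_, Prod.ext rfl (funext fun i => ?_)⟩
    · by_cases hi : i = j'
      · subst hi; simp [t, ← hc]
      · simpa [t, hi] using mem_blockInterval_blockIndex hk hl hy i
    · by_cases hi : i = j'
      · subst hi; simp [← hc]
      · simp [hi, hoff' i hi]
  calc _ ≤ #((Fintype.piFinset t).image fun y => (y, Function.update y j c.2)) := by
        rw [← Set.ncard_coe_finset]; exact Set.ncard_le_ncard hsub (finite_toSet _)
    _ ≤ ∏ i, #(t i) := card_image_le.trans (Fintype.card_piFinset t).le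
    _ = ∏ i ∈ univ \ {j}, #(blockInterval k l (x i)) := by
        rw [← one_mul (∏ i ∈ univ \ {j}, _), ← prod_update_of_mem (mem_univ j)]
        simp [t, Function.apply_update (fun _ s => #s)]
    _ ≤ ((l + k - 1) / k) ^ #(univ \ {j}) :=
        prod_le_pow_card _ _ _ fun i _ => card_blockInterval_le hk (x i)
    _ = ((l + k - 1) / k) ^ (n - 1) := by simp [card_sdiff]

end Edges

theorem gridBoundary_biUnion_block_le {k l n : ℕ} (hk : 0 < k) (hkl : k ≤ l)
    {A : Set (Fin n → ℕ)} (hA : A ⊆ gridPts k n) :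
    gridBoundary l n (⋃ x ∈ A, block k l n x) ≤
      ((l + k - 1) / k) ^ (n - 1) * gridBoundary k n A := by
  classical
  have hl : 0 < l := hk.trans_le hkl
  set f := Prod.map (blockIndex k l) (blockIndex k l (n := n))
  set E := boundaryEdges l n (⋃ x ∈ A, block k l n x)
  have hE : E ⊆ gridEdges l n :=
    boundaryEdges_subset_gridEdges fun y hy => (mem_biUnion_block_iff.1 hy).1
  have hEfin := (gridEdges_finite l n).subset hE
  have hAfin := (gridEdges_finite k n).subset (boundaryEdges_subset_gridEdges hA)
  rw [gridBoundary_eq_ncard, gridBoundary_eq_ncard, Set.ncard_eq_toFinset_card _ hEfin,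
    Set.ncard_eq_toFinset_card _ hAfin]
  refine card_le_mul_card_image_of_maps_to (f := f) (fun p hp => ?_) _ fun b hb => ?_
  · simpa using mapsTo_boundaryEdges hk hkl A (hEfin.mem_toFinset.1 hp)
  calc #{p ∈ hEfin.toFinset | f p = b} = (E ∩ f ⁻¹' {b}).ncard := by
        rw [← Set.ncard_coe_finset]; congr; ext; simp
    _ ≤ (gridEdges l n ∩ f ⁻¹' {b}).ncard :=
        Set.ncard_le_ncard (Set.inter_subset_inter_left _ hE)
          ((gridEdges_finite l n).subset Set.inter_subset_left)
    _ ≤ ((l + k - 1) / k) ^ (n - 1) :=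
        ncard_gridEdges_inter_preimage_le hk hl (hAfin.mem_toFinset.1 hb).2.2.2

lemma ceilDiv_mul_le_one_add_div_mul {k l : ℕ} (hk : 0 < k) (hkl : k < l) :
    (((l + k - 1) / k : ℕ) : ℝ) * k ≤ (1 + (k : ℝ) / ((l : ℝ) - k)) * l := by
  have hlk : (0 : ℝ) < l - k := sub_pos.2 (by exact_mod_cast hkl)
  have hceil : (l + k - 1) / k * k ≤ l + k := (Nat.div_mul_le_self _ _).trans (by omega)
  have hk_le : (k : ℝ) ≤ k / (l - k) * l := by
    rw [div_mul_eq_mul_div, le_div_iff₀ hlk]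
    nlinarith [(Nat.cast_pos.2 hk : (0 : ℝ) < k)]
  calc (((l + k - 1) / k : ℕ) : ℝ) * k ≤ l + k := by exact_mod_cast hceil
    _ ≤ (1 + (k : ℝ) / (l - k)) * l := by linarith

theorem stmt18_general (k l n : ℕ) (hk : 2 ≤ k) (hl : k < l)
    (hcond : (1 + (k : ℝ) / ((l : ℝ) - k)) ^ n ≤ 2)
    (A : Set (Fin n → ℕ)) (hA : A ⊆ gridPts k n) :
    (∀ x ∈ gridPts k n,
        (l / k) ^ n ≤ (block k l n x).ncard ∧ (block k l n x).ncard ≤ ((l + k - 1) / k) ^ n)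
      ∧ (gridBoundary l n (⋃ x ∈ A, block k l n x) : ℝ) / (l : ℝ) ^ (n - 1) ≤
          2 * (gridBoundary k n A : ℝ) / (k : ℝ) ^ (n - 1) := by
  have hk0 : 0 < k := by omega
  have hl0 : 0 < l := by omega
  refine ⟨fun x hx => ⟨div_pow_le_ncard_block hk0 hl0 hx, ncard_block_le hk0 hl0 hx⟩, ?_⟩
  have hcount : (gridBoundary l n (⋃ x ∈ A, block k l n x) : ℝ) ≤
      (((l + k - 1) / k : ℕ) : ℝ) ^ (n - 1) * gridBoundary k n A := by
    exact_mod_cast gridBoundary_biUnion_block_le hk0 hl.le hA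
  set t : ℝ := 1 + (k : ℝ) / ((l : ℝ) - k)
  have ht : 1 ≤ t := le_add_of_nonneg_right (div_nonneg (by positivity) (by simp [hl.le]))
  rw [div_le_div_iff₀ (by positivity) (by positivity)]
  calc _ ≤ (((l + k - 1) / k : ℕ) : ℝ) ^ (n - 1) * gridBoundary k n A * k ^ (n - 1) := by
        gcongr
    _ = gridBoundary k n A * ((((l + k - 1) / k : ℕ) : ℝ) * k) ^ (n - 1) := by ring
    _ ≤ gridBoundary k n A * (t * l) ^ (n - 1) := by
        gcongr gridBoundary k n A * ?_ ^ _
        exact ceilDiv_mul_le_one_add_div_mul hk0 hl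
    _ = gridBoundary k n A * t ^ (n - 1) * l ^ (n - 1) := by rw [mul_pow, mul_assoc]
    _ ≤ gridBoundary k n A * t ^ n * l ^ (n - 1) := by
        gcongr
        exact n.sub_le 1
    _ ≤ 2 * gridBoundary k n A * l ^ (n - 1) := by
        rw [mul_comm 2]; gcongr

/-- With `k ≥ 2`, `l > k`, `(1 + k/(l-k))^n ≤ 2`: every block satisfies
`⌊l/k⌋^n ≤ |R_x| ≤ ⌈l/k⌉^n`, and for `A ⊆ [k]^n` with `Ă = ∪_{x∈A} R_x`,
`|∂Ă|/l^{n-1} ≤ 2|∂A|/k^{n-1}`. -/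
theorem stmt18 (k l n : ℕ) (hn : 0 < n) (hk : 2 ≤ k) (hl : k < l)
    (hcond : (1 + (k : ℝ) / ((l : ℝ) - k)) ^ n ≤ 2)
    (A : Set (Fin n → ℕ)) (hA : A ⊆ gridPts k n) :
    (∀ x ∈ gridPts k n,
        (l / k) ^ n ≤ (block k l n x).ncard ∧ (block k l n x).ncard ≤ ((l + k - 1) / k) ^ n)
      ∧ (gridBoundary l n (⋃ x ∈ A, block k l n x) : ℝ) / (l : ℝ) ^ (n - 1) ≤
          2 * (gridBoundary k n A : ℝ) / (k : ℝ) ^ (n - 1) :=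
  stmt18_general k l n hk hl hcond A hA
end
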